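/- For every odd n ≥ 3 and every m ≥ 2, the disjoint union of m copies of the wheel W_n = K₁ + C_n admits a C₃-supermagic labeling with magic constant (m/2)(13n+11)+3. -/

import Mathlib

/-!
Number the hubs, the rim vertices, the spokes and the rim edges in consecutive blocks, so that
the vertices come first. Inside a block of size `mn`, copy `j` and position `i` are the two digits
of `m * σ i + τ j` for permutations `σ` of `Fin n` and `τ` of `Fin m`, so the labeling is a
bijection by construction. The copy digit runs backwards on the three vertices of a triangle and
forwards on its three edges, so it cancels. On the rim, `σ` is halving modulo the odd number `n`,
which makes the `σ`-digits of rim vertices `i` and `i + 1` sum to `n / 2 + (i + 1) mod n`; the spokes use the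
same halving shifted by `n / 2`, and the rim edge `i` cancels the remaining dependence on `i`
through `2 (i + 1) mod n`.
-/

open Function

/-- For odd `n` and `i < n`, `halve n i ≡ i / 2 (mod n)`. -/
def halve (n i : ℕ) : ℕ := if i % 2 = 0 then i / 2 else (n + i) / 2

lemma halve_lt {n i : ℕ} (hi : i < n) : halve n i < n := by
  unfold halve; split <;> omega

lemma halve_injOn {n i i' : ℕ} (hi : i < n) (hi' : i' < n) (h : halve n i = halve n i') :
    i = i' := by
  unfold halve at h; split at h <;> split at h <;> omega

lemma halve_add_halve_succ {n a : ℕ} (hn : Odd n) (ha : a < n) :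
    halve n a + halve n ((a + 1) % n) = n / 2 + (a + 1) % n := by
  obtain ⟨k, rfl⟩ := hn
  rcases (by omega : a + 1 < 2 * k + 1 ∨ a + 1 = 2 * k + 1) with h | h
  · rw [Nat.mod_eq_of_lt h]; unfold halve; split <;> split <;> omega
  · rw [h, Nat.mod_self]; unfold halve; split <;> split <;> omega

lemma add_add_half_mod {n a : ℕ} (hn : Odd n) (ha : a < n) :
    a + (a + n / 2) % n = n / 2 + 2 * a % n := by
  obtain ⟨k, rfl⟩ := hn
  rcases (by omega : a + (2 * k + 1) / 2 < 2 * k + 1 ∨ 2 * k + 1 ≤ a + (2 * k + 1) / 2)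
    with h | h
  · rw [Nat.mod_eq_of_lt h, Nat.mod_eq_of_lt (by omega)]; omega
  · rw [Nat.mod_eq_sub_mod h, Nat.mod_eq_of_lt (by omega), Nat.mod_eq_sub_mod (by omega),
      Nat.mod_eq_of_lt (by omega)]
    omega

section Permutations

variable {m n : ℕ}

lemma halve_fin_injective :
    Injective fun i : Fin n => (⟨halve n i, halve_lt i.2⟩ : Fin n) :=
  fun i i' h => Fin.ext (halve_injOn i.2 i'.2 (Fin.mk.inj h))

noncomputable def halvePerm (n : ℕ) : Equiv.Perm (Fin n) :=
  Equiv.ofBijective _ halve_fin_injective.bijective_of_finite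

@[simp] lemma halvePerm_apply_val (i : Fin n) : (halvePerm n i : ℕ) = halve n i := rfl

lemma rotate_injective (k : ℕ) :
    Injective fun i : Fin n => (⟨(i + k) % n, Nat.mod_lt _ i.pos⟩ : Fin n) := by
  intro i i' h
  have h' : (i : ℕ) ≡ i' [MOD n] := Nat.ModEq.add_right_cancel' k (Fin.mk.inj h)
  exact Fin.ext (Nat.ModEq.eq_of_lt_of_lt h' i.2 i'.2)

noncomputable def rotatePerm (n k : ℕ) : Equiv.Perm (Fin n) :=
  Equiv.ofBijective _ (rotate_injective k).bijective_of_finite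

@[simp] lemma rotatePerm_apply_val (k : ℕ) (i : Fin n) :
    (rotatePerm n k i : ℕ) = (i + k) % n := rfl

lemma doubleSucc_injective (hn : Odd n) :
    Injective fun i : Fin n => (⟨2 * (i + 1) % n, Nat.mod_lt _ i.pos⟩ : Fin n) := by
  intro i i' h
  have h2 : Nat.Coprime n 2 := Nat.coprime_two_right.mpr hn
  have h' : (i : ℕ) + 1 ≡ i' + 1 [MOD n] := Nat.ModEq.cancel_left_of_coprime h2 (Fin.mk.inj h)
  exact Fin.ext (Nat.ModEq.eq_of_lt_of_lt (Nat.ModEq.add_right_cancel' 1 h') i.2 i'.2)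

noncomputable def doubleSuccPerm (hn : Odd n) : Equiv.Perm (Fin n) :=
  Equiv.ofBijective _ (doubleSucc_injective hn).bijective_of_finite

@[simp] lemma doubleSuccPerm_apply_val (hn : Odd n) (i : Fin n) :
    (doubleSuccPerm hn i : ℕ) = 2 * (i + 1) % n := rfl

def blockEquiv (τ : Equiv.Perm (Fin m)) (σ : Equiv.Perm (Fin n)) :
    Fin m × Fin n ≃ Fin (n * m) :=
  (Equiv.prodCongr τ σ).trans ((Equiv.prodComm _ _).trans finProdFinEquiv)

@[simp] lemma blockEquiv_apply_val (τ : Equiv.Perm (Fin m)) (σ : Equiv.Perm (Fin n))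
    (j : Fin m) (i : Fin n) : (blockEquiv τ σ (j, i) : ℕ) = τ j + m * σ i := rfl

end Permutations

lemma range_equiv_fin_val_succ {α : Type*} {N : ℕ} (e : α ≃ Fin N) :
    Set.range (fun x => (e x : ℕ) + 1) = Set.Icc 1 N := by
  ext y
  simp only [Set.mem_range, Set.mem_Icc]
  constructor
  · rintro ⟨x, rfl⟩
    have := (e x).2
    omega
  · rintro ⟨h1, h2⟩
    exact ⟨e.symm ⟨y - 1, by omega⟩, by simp only [Equiv.apply_symm_apply]; omega⟩

noncomputable def wheelEquiv (m n : ℕ) (hn : Odd n) :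
    (Fin m ⊕ Fin m × Fin n) ⊕ ((Fin m × Fin n) ⊕ (Fin m × Fin n)) ≃
      Fin (m + n * m + (n * m + n * m)) :=
  (Equiv.sumCongr
    ((Equiv.sumCongr Fin.revPerm (blockEquiv Fin.revPerm (halvePerm n))).trans finSumFinEquiv)
    ((Equiv.sumCongr (blockEquiv (Equiv.refl _) ((rotatePerm n (n / 2)).trans (halvePerm n)))
      (blockEquiv (Equiv.refl _) ((doubleSuccPerm hn).trans Fin.revPerm))).trans
      finSumFinEquiv)).trans finSumFinEquiv

noncomputable def wheelLabel (m n : ℕ) (hn : Odd n)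
    (x : (Fin m ⊕ Fin m × Fin n) ⊕ ((Fin m × Fin n) ⊕ (Fin m × Fin n))) : ℕ :=
  wheelEquiv m n hn x + 1

section WheelLabel

variable {m n : ℕ} (hn : Odd n) (j : Fin m) (i : Fin n)

lemma wheelEquiv_vertex_lt (x : Fin m ⊕ Fin m × Fin n) :
    (wheelEquiv m n hn (.inl x) : ℕ) < m + n * m := by
  simp only [wheelEquiv, Equiv.trans_apply, Equiv.sumCongr_apply, Sum.map_inl,
    finSumFinEquiv_apply_left, Fin.val_castAdd]
  exact Fin.is_lt _

lemma wheelEquiv_hub : (wheelEquiv m n hn (.inl (.inl j)) : ℕ) = m - (j + 1) := by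
  simp [wheelEquiv]

lemma wheelEquiv_rim :
    (wheelEquiv m n hn (.inl (.inr (j, i))) : ℕ) = m + (m - (j + 1) + m * halve n i) := by
  simp [wheelEquiv]

lemma wheelEquiv_spoke :
    (wheelEquiv m n hn (.inr (.inl (j, i))) : ℕ) =
      m + n * m + (j + m * halve n ((i + n / 2) % n)) := by
  simp [wheelEquiv]

lemma wheelEquiv_rimEdge :
    (wheelEquiv m n hn (.inr (.inr (j, i))) : ℕ) =
      m + n * m + n * m + (j + m * (n - (2 * (i + 1) % n + 1))) := by
  simp only [wheelEquiv, Equiv.trans_apply, Equiv.sumCongr_apply, Equiv.coe_trans, Sum.map_inr,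
    comp_apply, finSumFinEquiv_apply_right, Fin.natAdd_eq_addNat, Fin.val_natAdd, Fin.val_addNat,
    blockEquiv_apply_val, Equiv.refl_apply, Fin.revPerm_apply, Fin.val_rev, doubleSuccPerm_apply_val]
  omega

lemma wheelLabel_triangle (i' : Fin n) (hi' : (i' : ℕ) = (i + 1) % n) :
    wheelLabel m n hn (.inl (.inl j)) + wheelLabel m n hn (.inl (.inr (j, i)))
      + wheelLabel m n hn (.inl (.inr (j, i'))) + wheelLabel m n hn (.inr (.inl (j, i)))
      + wheelLabel m n hn (.inr (.inl (j, i'))) + wheelLabel m n hn (.inr (.inr (j, i)))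
      = 13 * (m * (n / 2)) + 12 * m + 3 := by
  have hnm : n * m = 2 * (m * (n / 2)) + m := by
    obtain ⟨r, rfl⟩ := hn
    rw [show (2 * r + 1) / 2 = r by omega]; ring
  simp only [wheelLabel, wheelEquiv_hub, wheelEquiv_rim, wheelEquiv_spoke, wheelEquiv_rimEdge, hi']
  set k := n / 2
  have rims : m * halve n i + m * halve n ((i + 1) % n) = m * k + m * ((i + 1) % n) := by
    rw [← Nat.mul_add, ← Nat.mul_add, halve_add_halve_succ hn i.2]
  have spokes : m * halve n ((i + k) % n) + m * halve n (((i + 1) % n + k) % n)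
      = m * k + m * ((i + 1 + k) % n) := by
    have h := halve_add_halve_succ hn (Nat.mod_lt (i + k) i.pos)
    rw [Nat.mod_add_mod, add_right_comm] at h
    rw [Nat.mod_add_mod, ← Nat.mul_add, ← Nat.mul_add, h]
  have rimEdge : m * ((i + 1) % n) + m * ((i + 1 + k) % n) = m * k + m * (2 * (i + 1) % n) := by
    have h := add_add_half_mod hn (Nat.mod_lt (i + 1) i.pos)
    rw [Nat.mod_add_mod, Nat.mul_mod_mod] at h
    rw [← Nat.mul_add, ← Nat.mul_add, h]
  have rimEdge_compl : m * (n - (2 * (i + 1) % n + 1)) + m * (2 * (i + 1) % n) + m = n * m := by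
    have := Nat.mod_lt (2 * (i + 1)) i.pos
    rw [← Nat.mul_add, ← Nat.mul_succ, Nat.mul_comm]
    congr 1
    omega
  have := j.2
  omega

end WheelLabel

/-- Vertices: hubs `Fin m` and rim vertices `Fin m × Fin n`.
Edges: spokes `Fin m × Fin n` and rim edges `Fin m × Fin n`
(rim edge `(j, i)` joins `vᵢ` and `vᵢ₊₁ (mod n)`). -/
theorem mWheel_odd_C3_supermagic (m n : ℕ) (hn : 3 ≤ n) (hodd : Odd n) :
    ∃ f : (Fin m ⊕ Fin m × Fin n) ⊕ ((Fin m × Fin n) ⊕ (Fin m × Fin n)) → ℕ,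
      Function.Injective f ∧
      Set.range f = Set.Icc 1 (m * (n + 1) + 2 * m * n) ∧
      (∀ x : Fin m ⊕ Fin m × Fin n, f (Sum.inl x) ≤ m * (n + 1)) ∧
      ∀ (j : Fin m) (i : Fin n),
        ((f (Sum.inl (Sum.inl j))
          + f (Sum.inl (Sum.inr (j, i)))
          + f (Sum.inl (Sum.inr (j, ⟨(i.val + 1) % n, Nat.mod_lt _ (by omega)⟩)))
          + f (Sum.inr (Sum.inl (j, i)))
          + f (Sum.inr (Sum.inl (j, ⟨(i.val + 1) % n, Nat.mod_lt _ (by omega)⟩)))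
          + f (Sum.inr (Sum.inr (j, i))) : ℕ) : ℚ)
        = (m : ℚ) / 2 * (13 * n + 11) + 3 := by
  refine ⟨wheelLabel m n hodd, ?_, ?_, fun x => ?_, fun j i => ?_⟩
  · exact (Nat.succ_injective.comp Fin.val_injective).comp (wheelEquiv m n hodd).injective
  · rw [show m * (n + 1) + 2 * m * n = m + n * m + (n * m + n * m) by ring]
    exact range_equiv_fin_val_succ (wheelEquiv m n hodd)
  · have := wheelEquiv_vertex_lt hodd x
    rw [wheelLabel, Nat.mul_succ, Nat.mul_comm m n]
    omega
  · rw [wheelLabel_triangle hodd j i _ rfl]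
    have hn2 : (n : ℚ) = 2 * (n / 2 : ℕ) + 1 := by
      exact_mod_cast (Nat.two_mul_div_two_add_one_of_odd hodd).symm
    push_cast
    rw [hn2]
    ring
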